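/- Let p(x,ξ) = |ξ|² − |∇φ(x)|² and q(x,ξ) = 2∇φ(x)·ξ, where φ(x) = (1/2)·log|x − x₀|². Then the Poisson bracket {p,q}(x,ξ) = ∇_ξ p·∇ₓ q − ∇ₓ p·∇_ξ q vanishes at every point (x,ξ) with x ≠ x₀ where p(x,ξ) = 0 and q(x,ξ) = 0. -/

import Mathlib

/-! On the characteristic set `p = q = 0` the bracket vanishes because of the identity
`{p, q} = 4 |x - x₀|⁻² p - 2 q²`, valid at every `x ≠ x₀`: writing `w = x - x₀`, one has
`∇φ = w / |w|²`, `|∇φ|² = |w|⁻²`, so `p = |ξ|² - |w|⁻²` and `q = 2 ⟪w, ξ⟫ / |w|²`, and the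
bracket is an explicit rational expression in `|ξ|²`, `|w|²` and `⟪w, ξ⟫`. -/

open scoped RealInnerProductSpace

variable {F : Type*} [NormedAddCommGroup F] [InnerProductSpace ℝ F]

theorem norm_sq_inv_norm_sq_smul (w : F) : ‖(‖w‖ ^ 2)⁻¹ • w‖ ^ 2 = (‖w‖ ^ 2)⁻¹ := by
  rcases eq_or_ne w 0 with rfl | hw
  · simp
  · rw [norm_smul, mul_pow, norm_inv, norm_pow, norm_norm]
    field_simp

variable [CompleteSpace F]

theorem HasFDerivAt.hasGradientAt_of_apply {f : F → ℝ} {L : F →L[ℝ] ℝ} {g x : F}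
    (h : HasFDerivAt f L x) (hL : ∀ v, L v = ⟪g, v⟫) : HasGradientAt f g x := by
  obtain rfl : L = InnerProductSpace.toDual ℝ F g := ContinuousLinearMap.ext hL
  exact hasGradientAt_iff_hasFDerivAt.2 h

theorem hasGradientAt_norm_sq_sub_const (c : ℝ) (ξ : F) :
    HasGradientAt (fun η : F => ‖η‖ ^ 2 - c) ((2 : ℝ) • ξ) ξ :=
  ((hasStrictFDerivAt_norm_sq ξ).hasFDerivAt.sub_const c).hasGradientAt_of_apply fun v => by
    simp [real_inner_smul_left]

theorem hasGradientAt_const_mul_inner (c : ℝ) (g ξ : F) :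
    HasGradientAt (fun η => c * ⟪g, η⟫) (c • g) ξ :=
  (((hasFDerivAt_const g ξ).inner ℝ (hasFDerivAt_id ξ)).const_mul c).hasGradientAt_of_apply
    fun v => by simp [fderivInnerCLM_apply, real_inner_smul_left]

section Punctured

variable {x₀ x : F}

theorem hasGradientAt_half_log_norm_sq_sub (hx : x ≠ x₀) :
    HasGradientAt (fun y => 1 / 2 * Real.log (‖y - x₀‖ ^ 2)) ((‖x - x₀‖ ^ 2)⁻¹ • (x - x₀)) x := by
  have hr : ‖x - x₀‖ ^ 2 ≠ 0 := by simpa [sub_eq_zero] using hx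
  refine ((((hasFDerivAt_id x).sub_const x₀).norm_sq.log hr).const_mul (1 / 2)
    ).hasGradientAt_of_apply fun v => ?_
  simp only [id]
  generalize x - x₀ = w at *
  simp only [one_div, ContinuousLinearMap.comp_id, smul_apply,
    coe_innerSL_apply, real_inner_comm, nsmul_eq_mul, Nat.cast_ofNat, smul_eq_mul,
    real_inner_smul_right]
  ring

theorem hasGradientAt_const_sub_inv_norm_sq_sub (hx : x ≠ x₀) (c : ℝ) :
    HasGradientAt (fun y => c - (‖y - x₀‖ ^ 2)⁻¹) ((2 * (‖x - x₀‖ ^ 2)⁻¹ ^ 2) • (x - x₀)) x := by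
  have hr : ‖x - x₀‖ ^ 2 ≠ 0 := by simpa [sub_eq_zero] using hx
  refine (((hasDerivAt_inv hr).comp_hasFDerivAt x
    ((hasFDerivAt_id x).sub_const x₀).norm_sq).const_sub c).hasGradientAt_of_apply fun v => ?_
  simp only [id]
  generalize x - x₀ = w at *
  simp only [ContinuousLinearMap.comp_id, neg_smul, neg_neg, smul_apply,
    coe_innerSL_apply, real_inner_comm, nsmul_eq_mul, Nat.cast_ofNat, smul_eq_mul, inv_pow,
    real_inner_smul_right]
  ring

theorem hasGradientAt_two_mul_inv_norm_sq_sub_mul_inner (hx : x ≠ x₀) (ξ : F) :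
    HasGradientAt (fun y => 2 * ((‖y - x₀‖ ^ 2)⁻¹ * ⟪y - x₀, ξ⟫))
      ((2 * (‖x - x₀‖ ^ 2)⁻¹) • ξ - (4 * (‖x - x₀‖ ^ 2)⁻¹ ^ 2 * ⟪x - x₀, ξ⟫) • (x - x₀)) x := by
  have hr : ‖x - x₀‖ ^ 2 ≠ 0 := by simpa [sub_eq_zero] using hx
  refine ((((hasDerivAt_inv hr).comp_hasFDerivAt x ((hasFDerivAt_id x).sub_const x₀).norm_sq).mul
    (((hasFDerivAt_id x).sub_const x₀).inner ℝ (hasFDerivAt_const ξ x))).const_mul 2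
    ).hasGradientAt_of_apply fun v => ?_
  simp only [id, Function.comp_apply]
  generalize x - x₀ = w at *
  simp only [real_inner_comm, ContinuousLinearMap.comp_id, neg_smul, smul_neg, smul_add,
    add_apply, smul_apply, ContinuousLinearMap.comp_apply,
    ContinuousLinearMap.prod_apply, ContinuousLinearMap.id_apply, zero_apply,
    fderivInnerCLM_apply, inner_zero_right, zero_add, smul_eq_mul, neg_apply,
    coe_innerSL_apply, nsmul_eq_mul, Nat.cast_ofNat, inv_pow, inner_sub_right, real_inner_smul_right]
  ring

end Punctured

noncomputable def poissonBracket (p q : F → F → ℝ) (x ξ : F) : ℝ :=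
  ⟪gradient (fun η => p x η) ξ, gradient (fun y => q y ξ) x⟫
    - ⟪gradient (fun y => p y ξ) x, gradient (fun η => q x η) ξ⟫

section LogarithmicWeight

variable {x₀ : F} {φ : F → ℝ} {p q : F → F → ℝ}

theorem gradient_eq_of_log_norm_sq_sub (hφ : ∀ x, φ x = (1/2) * Real.log (‖x - x₀‖^2))
    {y : F} (hy : y ≠ x₀) : gradient φ y = (‖y - x₀‖ ^ 2)⁻¹ • (y - x₀) := by
  obtain rfl : φ = _ := funext hφ
  exact (hasGradientAt_half_log_norm_sq_sub hy).gradient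

theorem poissonBracket_eq_of_log_norm_sq_sub
    (hφ : ∀ x, φ x = (1/2) * Real.log (‖x - x₀‖^2))
    (hp : ∀ x ξ, p x ξ = ‖ξ‖^2 - ‖gradient φ x‖^2)
    (hq : ∀ x ξ, q x ξ = 2 * ⟪gradient φ x, ξ⟫) {x : F} (hx : x ≠ x₀) (ξ : F) :
    poissonBracket p q x ξ = 4 * (‖x - x₀‖ ^ 2)⁻¹ * p x ξ - 2 * q x ξ ^ 2 := by
  have hp_eq : ∀ y ≠ x₀, p y ξ = ‖ξ‖ ^ 2 - (‖y - x₀‖ ^ 2)⁻¹ := fun y hy => by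
    rw [hp, gradient_eq_of_log_norm_sq_sub hφ hy, norm_sq_inv_norm_sq_smul]
  have hq_eq : ∀ y ≠ x₀, q y ξ = 2 * ((‖y - x₀‖ ^ 2)⁻¹ * ⟪y - x₀, ξ⟫) := fun y hy => by
    rw [hq, gradient_eq_of_log_norm_sq_sub hφ hy, real_inner_smul_left]
  have hnear : ∀ᶠ y in nhds x, y ≠ x₀ := isOpen_ne.mem_nhds hx
  have hpξ : gradient (fun η => p x η) ξ = (2 : ℝ) • ξ := by
    simp only [hp x]
    exact (hasGradientAt_norm_sq_sub_const _ ξ).gradient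
  have hqξ : gradient (fun η => q x η) ξ = (2 : ℝ) • gradient φ x := by
    simp only [hq x]
    exact (hasGradientAt_const_mul_inner 2 _ ξ).gradient
  have hpx := ((hasGradientAt_const_sub_inv_norm_sq_sub hx (‖ξ‖ ^ 2)).congr_of_eventuallyEq
    (hnear.mono hp_eq)).gradient
  have hqx := ((hasGradientAt_two_mul_inv_norm_sq_sub_mul_inner hx ξ).congr_of_eventuallyEq
    (hnear.mono hq_eq)).gradient
  have hw : ‖x - x₀‖ ≠ 0 := by simpa [sub_eq_zero] using hx
  rw [poissonBracket, hpξ, hqξ, hpx, hqx, hp_eq x hx, hq_eq x hx,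
    gradient_eq_of_log_norm_sq_sub hφ hx]
  generalize x - x₀ = w at *
  simp only [inner_sub_right, real_inner_smul_left, real_inner_smul_right,
    real_inner_self_eq_norm_sq, real_inner_comm ξ w]
  field_simp
  ring

end LogarithmicWeight

theorem stmt_7 (n : ℕ) (x₀ : EuclideanSpace ℝ (Fin n))
    (φ : EuclideanSpace ℝ (Fin n) → ℝ)
    (hφ : ∀ x, φ x = (1/2) * Real.log (‖x - x₀‖^2))
    (p q : EuclideanSpace ℝ (Fin n) → EuclideanSpace ℝ (Fin n) → ℝ)
    (hp : ∀ x ξ, p x ξ = ‖ξ‖^2 - ‖gradient φ x‖^2)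
    (hq : ∀ x ξ, q x ξ = 2 * ⟪gradient φ x, ξ⟫) :
    ∀ x ξ, x ≠ x₀ → p x ξ = 0 → q x ξ = 0 →
      ⟪gradient (fun η => p x η) ξ, gradient (fun y => q y ξ) x⟫
        - ⟪gradient (fun y => p y ξ) x, gradient (fun η => q x η) ξ⟫ = 0 := by
  intro x ξ hx hp0 hq0
  calc poissonBracket p q x ξ
      = 4 * (‖x - x₀‖ ^ 2)⁻¹ * p x ξ - 2 * q x ξ ^ 2 :=
        poissonBracket_eq_of_log_norm_sq_sub hφ hp hq hx ξ
    _ = 0 := by rw [hp0, hq0]; ring
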